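/- Let G be a subgroup of the orientation-preserving homeomorphisms of the circle with no non-abelian free subgroup. Then the set G₀ = {g ∈ G : g has a fixed point in S¹} is a normal subgroup of G. -/

import Mathlib

/-- The circle `S¹ = ℝ/ℤ`. -/
abbrev S1 := AddCircle (1 : ℝ)

/-- `F : ℝ → ℝ` is a lift of `f` through the covering `ℝ → ℝ/ℤ`, witnessing that `f`
is an orientation-preserving homeomorphism of the circle. -/
def IsLiftOf (f : Equiv.Perm S1) (F : ℝ → ℝ) : Prop :=
  StrictMono F ∧ Continuous F ∧ (∀ x : ℝ, F (x + 1) = F x + 1) ∧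
    ∀ x : ℝ, f ((x : ℝ) : S1) = ((F x : ℝ) : S1)

/-- `f` is an orientation-preserving homeomorphism of the circle. -/
def IsPosHomeo (f : Equiv.Perm S1) : Prop := ∃ F, IsLiftOf f F

/-- `ρ` is the translation number of the lift `F`. -/
def HasRotLim (F : ℝ → ℝ) (ρ : ℝ) : Prop :=
  Filter.Tendsto (fun n : ℕ => F^[n] 0 / n) Filter.atTop (nhds ρ)

/-- `G` contains a non-abelian free subgroup (one isomorphic to the free group of rank 2). -/
def HasFreeSubgroup (G : Subgroup (Equiv.Perm S1)) : Prop :=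
  ∃ φ : FreeGroup (Fin 2) →* Equiv.Perm S1, Function.Injective φ ∧ ∀ w, φ w ∈ G

/-!
If `f, g ∈ G` have fixed points but no common one, their fixed-point sets are disjoint closed
subsets of `S¹`, with disjoint open neighbourhoods `U` and `V`. On a lift of `f` fixing a point,
every orbit starting off the fixed set is monotone and converges to a fixed point, locally
uniformly; compactness of `S¹ \ U` then yields a power `f ^ M` such that both `f ^ M` and
`f⁻¹ ^ M` send `S¹ \ U` to points whose whole forward orbit stays in `U`. These trapped sets of
`f`, `f⁻¹`, `g`, `g⁻¹` are ping-pong sets for `f ^ M` and `g ^ N`, which hence generate a free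
group. So without free subgroups the elements with a fixed point are closed under products;
inverses and conjugates are immediate.
-/

open Set Filter Topology Function Pointwise

section PingPong

variable {H α : Type*} [Group H] [MulAction H α]

def trappedSet (g : H) (U : Set α) : Set α := {x | ∀ n : ℕ, g ^ n • x ∈ U}

variable {g : H} {U : Set α}

lemma trappedSet_subset : trappedSet g U ⊆ U := fun x hx => by simpa using hx 0

lemma pow_smul_mem_trappedSet {x : α} (hx : x ∈ trappedSet g U) (k : ℕ) :
    g ^ k • x ∈ trappedSet g U := fun n => by
  rw [smul_smul, ← pow_add]; exact hx _

lemma pow_smul_mem_trappedSet_of_le {x : α} {M N : ℕ} (hM : g ^ M • x ∈ trappedSet g U)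
    (hMN : M ≤ N) : g ^ N • x ∈ trappedSet g U := by
  obtain ⟨k, rfl⟩ := Nat.exists_eq_add_of_le hMN
  rw [add_comm, pow_add, mul_smul]
  exact pow_smul_mem_trappedSet hM k

lemma pow_smul_compl_subset_trappedSet {N : ℕ} (hN : ∀ x ∉ U, g ^ N • x ∈ trappedSet g U) :
    g ^ N • (trappedSet g⁻¹ U \ trappedSet g U)ᶜ ⊆ trappedSet g U := by
  rintro _ ⟨x, hx, rfl⟩
  by_cases hxg : x ∈ trappedSet g U
  · exact pow_smul_mem_trappedSet hxg N
  obtain ⟨k, hk⟩ := not_forall.1 fun h => hx ⟨h, hxg⟩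
  have := pow_smul_mem_trappedSet (hN _ hk) k
  rwa [smul_smul, smul_smul, show g ^ k * g ^ N * g⁻¹ ^ k = g ^ N by group] at this

lemma inv_pow_smul_compl_subset_trappedSet {N : ℕ}
    (hN : ∀ x ∉ U, g⁻¹ ^ N • x ∈ trappedSet g⁻¹ U) :
    (g ^ N)⁻¹ • (trappedSet g U)ᶜ ⊆ trappedSet g⁻¹ U \ trappedSet g U := by
  rintro _ ⟨x, hx, rfl⟩
  obtain ⟨k, hk⟩ := not_forall.1 hx
  refine ⟨?_, fun h => hx ?_⟩
  · have := pow_smul_mem_trappedSet (hN _ hk) k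
    rwa [smul_smul, smul_smul, show g⁻¹ ^ k * g⁻¹ ^ N * g ^ k = (g ^ N)⁻¹ by group] at this
  · simpa using pow_smul_mem_trappedSet h N

end PingPong

lemma mem_trappedSet_of_isFixedPt {α : Type*} {g : Equiv.Perm α} {U : Set α} {x : α}
    (hx : IsFixedPt g x) (hxU : x ∈ U) : x ∈ trappedSet g U := fun n => by
  rwa [Equiv.Perm.smul_def, (hx.perm_pow n).eq]

theorem injective_lift_pow_of_trappedSet {H : Type} {α : Type*} [Group H] [MulAction H α]
    {f g : H} {U V : Set α} (hUV : Disjoint U V) {M N : ℕ}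
    (hf : ∀ x ∉ U, f ^ M • x ∈ trappedSet f U) (hf' : ∀ x ∉ U, f⁻¹ ^ M • x ∈ trappedSet f⁻¹ U)
    (hg : ∀ x ∉ V, g ^ N • x ∈ trappedSet g V) (hg' : ∀ x ∉ V, g⁻¹ ^ N • x ∈ trappedSet g⁻¹ V)
    (hfU : (trappedSet f U).Nonempty) (hgV : (trappedSet g V).Nonempty) :
    Function.Injective (FreeGroup.lift ![f ^ M, g ^ N]) := by
  have hX {h : H} {W : Set α} : trappedSet h W ⊆ W := trappedSet_subset
  have hY {h : H} {W : Set α} : trappedSet h⁻¹ W \ trappedSet h W ⊆ W :=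
    sdiff_subset.trans trappedSet_subset
  refine FreeGroup.injective_lift_of_ping_pong ![f ^ M, g ^ N] ![trappedSet f U, trappedSet g V]
    ![trappedSet f⁻¹ U \ trappedSet f U, trappedSet g⁻¹ V \ trappedSet g V] ?_ ?_ ?_ ?_ ?_ ?_
  · simpa [Fin.forall_fin_two] using ⟨hfU, hgV⟩
  · intro i j hij
    fin_cases i <;> fin_cases j
    exacts [absurd rfl hij, hUV.mono hX hX, hUV.symm.mono hX hX, absurd rfl hij]
  · intro i j hij
    fin_cases i <;> fin_cases j
    exacts [absurd rfl hij, hUV.mono hY hY, hUV.symm.mono hY hY, absurd rfl hij]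
  · simp only [Fin.forall_fin_two]
    exact ⟨⟨disjoint_sdiff_right, hUV.mono hX hY⟩, hUV.symm.mono hX hY, disjoint_sdiff_right⟩
  · simpa [Fin.forall_fin_two] using
      ⟨pow_smul_compl_subset_trappedSet hf, pow_smul_compl_subset_trappedSet hg⟩
  · simpa [Fin.forall_fin_two] using
      ⟨inv_pow_smul_compl_subset_trappedSet hf', inv_pow_smul_compl_subset_trappedSet hg'⟩

section OrderDynamics

variable {α : Type*} [ConditionallyCompleteLinearOrder α] [TopologicalSpace α] [OrderTopology α]
  {Φ : α → α} {V : Set α}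

/- The orbit of `x` increases to a fixed point `L`; once it has entered an interval `Ioc l L ⊆ V`
it stays there, and entering it is an open condition on the starting point. -/
theorem exists_eventually_iterate_mem_of_lt_map (hmono : Monotone Φ) (hcont : Continuous Φ)
    (hV : IsOpen V) (hfix : fixedPoints Φ ⊆ V) {x c : α} (hxc : x ≤ c) (hc : IsFixedPt Φ c)
    (hx : x < Φ x) : ∃ n, ∀ᶠ y in 𝓝 x, ∀ m ≥ n, Φ^[m] y ∈ V := by
  have horbit : Monotone fun n => Φ^[n] x := hmono.monotone_iterate_of_le_map hx.le
  have hbdd : BddAbove (range fun n => Φ^[n] x) :=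
    ⟨c, by rintro _ ⟨n, rfl⟩; exact (hmono.iterate n hxc).trans_eq (hc.iterate n).eq⟩
  set L := ⨆ n, Φ^[n] x
  have hlim : Tendsto (fun n => Φ^[n] x) atTop (𝓝 L) := tendsto_atTop_ciSup horbit hbdd
  have hL : IsFixedPt Φ L := by
    refine tendsto_nhds_unique ((hcont.tendsto L).comp hlim) ?_
    simpa only [comp_def, ← iterate_succ_apply' Φ] using hlim.comp (tendsto_add_atTop_nat 1)
  have hxL : x < L := hx.trans_le (le_ciSup hbdd 1)
  obtain ⟨l, hlL, hlV⟩ := exists_Ioc_subset_of_mem_nhds (hV.mem_nhds (hfix hL)) ⟨x, hxL⟩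
  obtain ⟨n, hn⟩ := (hlim.eventually (lt_mem_nhds hlL)).exists
  refine ⟨n, ?_⟩
  filter_upwards [((hcont.iterate n).tendsto x).eventually (lt_mem_nhds hn),
    tendsto_id.eventually_lt (hcont.tendsto x) hx, eventually_le_nhds hxL] with y hly hy hyL m hm
  exact hlV ⟨hly.trans_le (hmono.monotone_iterate_of_le_map hy.le hm),
    (hmono.iterate m hyL).trans_eq (hL.iterate m).eq⟩

theorem exists_eventually_iterate_mem_of_map_lt (hmono : Monotone Φ) (hcont : Continuous Φ)
    (hV : IsOpen V) (hfix : fixedPoints Φ ⊆ V) {x c : α} (hcx : c ≤ x) (hc : IsFixedPt Φ c)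
    (hx : Φ x < x) : ∃ n, ∀ᶠ y in 𝓝 x, ∀ m ≥ n, Φ^[m] y ∈ V :=
  exists_eventually_iterate_mem_of_lt_map (α := αᵒᵈ) hmono.dual hcont hV hfix hcx hc hx

end OrderDynamics

section Lift

variable {F : ℝ → ℝ}

lemma periodic_sub_self_of_map_add_one (h : ∀ x, F (x + 1) = F x + 1) :
    Periodic (fun x => F x - x) 1 := fun x => by
  simp only [h]; ring

lemma map_add_int_of_map_add_one (h : ∀ x, F (x + 1) = F x + 1) (x : ℝ) (k : ℤ) :
    F (x + k) = F x + k := by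
  have := (periodic_sub_self_of_map_add_one h).int_mul k x
  simp only [mul_one] at this
  linarith

lemma surjective_of_map_add_one (hcont : Continuous F) (h : ∀ x, F (x + 1) = F x + 1) :
    Surjective F := by
  obtain ⟨C, hC⟩ := isBounded_iff_forall_norm_le.1 <|
    (periodic_sub_self_of_map_add_one h).isBounded_of_continuous one_ne_zero
      (hcont.sub continuous_id)
  have hC' (x : ℝ) : |F x - x| ≤ C := hC _ ⟨x, rfl⟩
  refine hcont.surjective ?_ ?_
  · refine tendsto_atTop_mono (fun x => ?_) (tendsto_atTop_add_const_right _ (-C) tendsto_id)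
    linarith [(abs_le.1 (hC' x)).1, id_eq x]
  · refine tendsto_atBot_mono (fun x => ?_) (tendsto_atBot_add_const_right _ C tendsto_id)
    linarith [(abs_le.1 (hC' x)).2, id_eq x]

lemma exists_eventually_iterate_mem_of_map_add_one (hmono : Monotone F) (hcont : Continuous F)
    (hper : ∀ x, F (x + 1) = F x + 1) {t : ℝ} (ht : IsFixedPt F t) {V : Set ℝ} (hV : IsOpen V)
    (hfix : fixedPoints F ⊆ V) {x : ℝ} (hx : ¬IsFixedPt F x) :
    ∃ n, ∀ᶠ y in 𝓝 x, ∀ m ≥ n, F^[m] y ∈ V := by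
  have hfixed (k : ℤ) : IsFixedPt F (t + k) := by
    rw [IsFixedPt, map_add_int_of_map_add_one hper, ht.eq]
  rcases lt_or_gt_of_ne hx with h | h
  · refine exists_eventually_iterate_mem_of_map_lt hmono hcont hV hfix ?_ (hfixed ⌊x - t⌋) h
    linarith [Int.floor_le (x - t)]
  · refine exists_eventually_iterate_mem_of_lt_map hmono hcont hV hfix ?_ (hfixed ⌈x - t⌉) h
    linarith [Int.le_ceil (x - t)]

end Lift

section Circle

variable {f : Equiv.Perm S1}

lemma IsLiftOf.iterate_apply {F : ℝ → ℝ} (hF : IsLiftOf f F) (n : ℕ) (x : ℝ) :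
    (f ^ n) (x : S1) = (F^[n] x : S1) := by
  induction n generalizing x with
  | zero => rfl
  | succ n ih => rw [pow_succ, Equiv.Perm.mul_apply, hF.2.2.2, ih, iterate_succ_apply]

lemma IsPosHomeo.continuous (hf : IsPosHomeo f) : Continuous f := by
  obtain ⟨F, -, hcont, -, hlift⟩ := hf
  rw [(QuotientAddGroup.isQuotientMap_mk _).continuous_iff]
  exact (AddCircle.continuous_mk' 1).comp hcont |>.congr fun x => (hlift x).symm

lemma IsPosHomeo.exists_lift_isFixedPt (hf : IsPosHomeo f) {t : ℝ} (ht : IsFixedPt f t) :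
    ∃ F, IsLiftOf f F ∧ IsFixedPt F t := by
  obtain ⟨F, hmono, hcont, hper, hlift⟩ := hf
  obtain ⟨k, hk⟩ := (AddCircle.coe_eq_zero_iff 1).1 <|
    show ((F t - t : ℝ) : S1) = 0 by rw [AddCircle.coe_sub, ← hlift, ht.eq, sub_self]
  have hk0 : (((k : ℤ) : ℝ) : S1) = 0 := (AddCircle.coe_eq_zero_iff 1).2 ⟨k, by simp⟩
  refine ⟨fun x => F x - k, ⟨fun a b hab => sub_lt_sub_right (hmono hab) _,
    hcont.sub continuous_const, fun x => by simp only [hper]; ring, fun x => ?_⟩, ?_⟩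
  · rw [hlift, AddCircle.coe_sub, hk0, sub_zero]
  · rw [zsmul_one] at hk
    change F t - k = t
    linarith

lemma IsPosHomeo.inv (hf : IsPosHomeo f) : IsPosHomeo f⁻¹ := by
  obtain ⟨F, hmono, hcont, hper, hlift⟩ := hf
  let e := hmono.orderIsoOfSurjective F (surjective_of_map_add_one hcont hper)
  have he (x : ℝ) : F (e.symm x) = x := e.apply_symm_apply x
  refine ⟨e.symm, e.symm.strictMono, e.symm.continuous, fun y => ?_, fun y => ?_⟩
  · apply hmono.injective
    rw [hper, he, he]
  · rw [Equiv.Perm.inv_eq_iff_eq, hlift, he]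

lemma IsPosHomeo.exists_pow_smul_mem_trappedSet (hf : IsPosHomeo f)
    (hfix : (fixedPoints f).Nonempty) {U : Set S1} (hU : IsOpen U) (hfixU : fixedPoints f ⊆ U) :
    ∃ N, ∀ z ∉ U, f ^ N • z ∈ trappedSet f U := by
  obtain ⟨z₀, hz₀⟩ := hfix
  obtain ⟨t, rfl⟩ := QuotientAddGroup.mk_surjective z₀
  obtain ⟨F, hF, ht⟩ := hf.exists_lift_isFixedPt hz₀
  have ⟨hmono, hcont, hper, hlift⟩ := hF
  have hFfix : fixedPoints F ⊆ (↑) ⁻¹' U := fun y hy => hfixU <| by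
    rw [mem_fixedPoints, IsFixedPt, hlift, hy.eq]
  let O (n : ℕ) : Set S1 := interior {z | f ^ n • z ∈ trappedSet f U}
  have hcover : Uᶜ ⊆ ⋃ n, O n := by
    intro z hz
    obtain ⟨x, rfl⟩ := QuotientAddGroup.mk_surjective z
    obtain ⟨n, hn⟩ := exists_eventually_iterate_mem_of_map_add_one hmono.monotone hcont hper ht
      (hU.preimage (AddCircle.continuous_mk' 1)) hFfix fun h => hz (hFfix h)
    refine mem_iUnion.2 ⟨n, mem_interior_iff_mem_nhds.2 ?_⟩
    filter_upwards [QuotientAddGroup.isOpenMap_coe.image_mem_nhds hn]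
    rintro _ ⟨y, hy, rfl⟩ k
    rw [smul_smul, ← pow_add, Equiv.Perm.smul_def, hF.iterate_apply]
    exact hy _ (Nat.le_add_left _ _)
  obtain ⟨N, hN⟩ := hU.isClosed_compl.isCompact.elim_directed_cover O (fun _ => isOpen_interior)
    hcover <| Monotone.directed_le fun m n hmn =>
      interior_mono fun z hz => pow_smul_mem_trappedSet_of_le hz hmn
  exact ⟨N, fun z hz => interior_subset (s := {z | f ^ N • z ∈ trappedSet f U}) (hN hz)⟩

lemma IsPosHomeo.exists_pow_smul_mem_trappedSet_and_inv (hf : IsPosHomeo f)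
    (hfix : (fixedPoints f).Nonempty) {U : Set S1} (hU : IsOpen U) (hfixU : fixedPoints f ⊆ U) :
    ∃ N, (∀ z ∉ U, f ^ N • z ∈ trappedSet f U) ∧ ∀ z ∉ U, f⁻¹ ^ N • z ∈ trappedSet f⁻¹ U := by
  obtain ⟨N₁, h₁⟩ := hf.exists_pow_smul_mem_trappedSet hfix hU hfixU
  rw [← fixedPoints_symm (e := f)] at hfix hfixU
  obtain ⟨N₂, h₂⟩ := hf.inv.exists_pow_smul_mem_trappedSet hfix hU hfixU
  exact ⟨max N₁ N₂, fun z hz => pow_smul_mem_trappedSet_of_le (h₁ z hz) (le_max_left _ _),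
    fun z hz => pow_smul_mem_trappedSet_of_le (h₂ z hz) (le_max_right _ _)⟩

end Circle

theorem hasFreeSubgroup_of_disjoint_fixedPoints {G : Subgroup (Equiv.Perm S1)}
    {f g : Equiv.Perm S1} (hfG : f ∈ G) (hgG : g ∈ G) (hf : IsPosHomeo f) (hg : IsPosHomeo g)
    (hf₀ : (fixedPoints f).Nonempty) (hg₀ : (fixedPoints g).Nonempty)
    (hfg : Disjoint (fixedPoints f) (fixedPoints g)) : HasFreeSubgroup G := by
  obtain ⟨U, V, hU, hV, hfU, hgV, hUV⟩ := normal_separation (isClosed_fixedPoints hf.continuous)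
    (isClosed_fixedPoints hg.continuous) hfg
  obtain ⟨M, hM, hM'⟩ := hf.exists_pow_smul_mem_trappedSet_and_inv hf₀ hU hfU
  obtain ⟨N, hN, hN'⟩ := hg.exists_pow_smul_mem_trappedSet_and_inv hg₀ hV hgV
  obtain ⟨x, hx⟩ := hf₀
  obtain ⟨y, hy⟩ := hg₀
  refine ⟨FreeGroup.lift ![f ^ M, g ^ N], injective_lift_pow_of_trappedSet hUV hM hM' hN hN'
    ⟨x, mem_trappedSet_of_isFixedPt hx (hfU hx)⟩ ⟨y, mem_trappedSet_of_isFixedPt hy (hgV hy)⟩,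
    fun w => FreeGroup.range_lift_le ?_ ⟨w, rfl⟩⟩
  rintro _ ⟨i, rfl⟩
  fin_cases i
  exacts [pow_mem hfG M, pow_mem hgG N]

theorem stmt5 (G : Subgroup (Equiv.Perm S1)) (hpos : ∀ g ∈ G, IsPosHomeo g)
    (hfree : ¬ HasFreeSubgroup G) :
    ∃ H : Subgroup G,
      ((H : Set G) = {g : G | ∃ x : S1, (g : Equiv.Perm S1) x = x}) ∧ H.Normal := by
  refine ⟨{ carrier := {g : G | ∃ x : S1, (g : Equiv.Perm S1) x = x}
            one_mem' := ⟨0, rfl⟩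
            mul_mem' := ?_
            inv_mem' := ?_ }, rfl, ⟨?_⟩⟩
  · intro p q hp hq
    by_contra hpq
    refine hfree <| hasFreeSubgroup_of_disjoint_fixedPoints p.2 q.2 (hpos _ p.2) (hpos _ q.2) hp hq
      (Set.disjoint_left.2 fun z hpz hqz => hpq ⟨z, ?_⟩)
    simp only [Subgroup.coe_mul, Equiv.Perm.mul_apply, hqz.eq, hpz.eq]
  · rintro p ⟨z, hz⟩
    exact ⟨z, IsFixedPt.perm_inv hz⟩
  · rintro n ⟨z, hz⟩ g
    exact ⟨(g : Equiv.Perm S1) z, by simp [hz]⟩
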